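/- For every fixed γ ∈ [0,1], the function p ↦ E_0(p,γ) is monotonically nondecreasing on [0,1]. -/
import Mathlib


open Finset

/-- Gallager-type function
`E_0(p,γ) = −log₂ Σ_y P(y|0)^{1/(1+γ)}·[(1−p)·P(y|0)^{1/(1+γ)} + p·P(y|1)^{1/(1+γ)}]^γ`. -/
noncomputable def gallagerE0 {𝒴 : Type} [Fintype 𝒴] (P : ZMod 2 → 𝒴 → ℝ)
    (p γ : ℝ) : ℝ :=
  -Real.logb 2 (∑ y : 𝒴, P 0 y ^ ((1 : ℝ) / (1 + γ)) *
    ((1 - p) * P 0 y ^ ((1 : ℝ) / (1 + γ)) + p * P 1 y ^ ((1 : ℝ) / (1 + γ))) ^ γ)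

/-- For every fixed `γ ∈ [0,1]`, the function `p ↦ E_0(p,γ)` is monotonically
nondecreasing on `[0,1]`. -/
theorem gallagerE0_monotoneOn
    (𝒴 : Type) [Fintype 𝒴]
    (P : ZMod 2 → 𝒴 → ℝ)
    (hPpos : ∀ x y, 0 < P x y) (hPsum : ∀ x, ∑ y : 𝒴, P x y = 1)
    (γ : ℝ) (hγ0 : 0 ≤ γ) (hγ1 : γ ≤ 1) :
    MonotoneOn (fun p => gallagerE0 P p γ) (Set.Icc (0 : ℝ) 1) := by
  have h1γ : (0 : ℝ) < 1 + γ := by linarith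
  set e : ℝ := 1 / (1 + γ) with he
  set a : 𝒴 → ℝ := fun y => P 0 y ^ e with ha_def
  set b : 𝒴 → ℝ := fun y => P 1 y ^ e with hb_def
  have ha : ∀ y, 0 < a y := fun y => Real.rpow_pos_of_pos (hPpos 0 y) e
  have hb : ∀ y, 0 < b y := fun y => Real.rpow_pos_of_pos (hPpos 1 y) e
  have haP : ∀ y, a y ^ (1 + γ) = P 0 y := by
    intro y
    rw [ha_def, ← Real.rpow_mul (hPpos 0 y).le, he, one_div_mul_cancel h1γ.ne',
      Real.rpow_one]
  have hbP : ∀ y, b y ^ (1 + γ) = P 1 y := by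
    intro y
    rw [hb_def, ← Real.rpow_mul (hPpos 1 y).le, he, one_div_mul_cancel h1γ.ne',
      Real.rpow_one]
  set S : ℝ → ℝ := fun p => ∑ y : 𝒴, a y * ((1 - p) * a y + p * b y) ^ γ with hS_def
  -- positivity of the mixture
  have hm : ∀ p : ℝ, p ∈ Set.Icc (0:ℝ) 1 → ∀ y, 0 < (1 - p) * a y + p * b y := by
    rintro p ⟨hp0, hp1⟩ y
    rcases eq_or_lt_of_le hp0 with h | h
    · simp [← h]; linarith [ha y]
    · have : 0 < p * b y := mul_pos h (hb y)
      nlinarith [ha y]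
  have hne : Nonempty 𝒴 := by
    rcases isEmpty_or_nonempty 𝒴 with h | h
    · have := hPsum 0; simp at this
    · exact h
  have hSpos : ∀ p ∈ Set.Icc (0:ℝ) 1, 0 < S p := by
    intro p hp
    apply Finset.sum_pos
    · intro y _
      exact mul_pos (ha y) (Real.rpow_pos_of_pos (hm p hp y) γ)
    · exact univ_nonempty
  -- Step A : S p ≤ 1 on [0,1]
  have hSle : ∀ p ∈ Set.Icc (0:ℝ) 1, S p ≤ 1 := by
    rintro p ⟨hp0, hp1⟩
    have hstep : ∀ y, a y * ((1 - p) * a y + p * b y) ^ γ ≤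
        (1 / (1 + γ)) * P 0 y + (γ / (1 + γ)) * ((1 - p) * a y + p * b y) ^ (1 + γ) := by
      intro y
      set m : ℝ := (1 - p) * a y + p * b y with hm_def
      have hm0 : 0 < m := hm p ⟨hp0, hp1⟩ y
      have key := Real.geom_mean_le_arith_mean2_weighted
        (w₁ := 1 / (1 + γ)) (w₂ := γ / (1 + γ))
        (p₁ := a y ^ (1 + γ)) (p₂ := m ^ (1 + γ))
        (by positivity) (by positivity)
        (Real.rpow_nonneg (ha y).le _) (Real.rpow_nonneg hm0.le _)
        (by field_simp)
      have e1 : (a y ^ (1 + γ)) ^ (1 / (1 + γ)) = a y := by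
        rw [← Real.rpow_mul (ha y).le, mul_one_div_cancel h1γ.ne', Real.rpow_one]
      have e2 : (m ^ (1 + γ)) ^ (γ / (1 + γ)) = m ^ γ := by
        rw [← Real.rpow_mul hm0.le]
        congr 1
        field_simp
      rw [e1, e2, haP y] at key
      exact key
    calc S p ≤ ∑ y : 𝒴, ((1 / (1 + γ)) * P 0 y +
          (γ / (1 + γ)) * ((1 - p) * a y + p * b y) ^ (1 + γ)) :=
        Finset.sum_le_sum fun y _ => hstep y
      _ ≤ ∑ y : 𝒴, ((1 / (1 + γ)) * P 0 y +
          (γ / (1 + γ)) * ((1 - p) * P 0 y + p * P 1 y)) := by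
        apply Finset.sum_le_sum
        intro y _
        have hconv := (convexOn_rpow (p := 1 + γ) (by linarith)).2
          (Set.mem_Ici.mpr (ha y).le) (Set.mem_Ici.mpr (hb y).le)
          (by linarith : (0:ℝ) ≤ 1 - p) hp0 (by ring)
        simp only [smul_eq_mul] at hconv
        rw [haP y, hbP y] at hconv
        have : (0:ℝ) ≤ γ / (1 + γ) := by positivity
        nlinarith [hconv]
      _ = 1 := by
        rw [Finset.sum_add_distrib, ← Finset.mul_sum, ← Finset.mul_sum]
        have : ∑ y : 𝒴, ((1 - p) * P 0 y + p * P 1 y) = 1 := by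
          rw [Finset.sum_add_distrib, ← Finset.mul_sum, ← Finset.mul_sum,
            hPsum 0, hPsum 1]; ring
        rw [this, hPsum 0]
        field_simp
  -- Step B : S is nonincreasing on [0,1]
  have hSmono : ∀ p ∈ Set.Icc (0:ℝ) 1, ∀ q ∈ Set.Icc (0:ℝ) 1, p ≤ q → S q ≤ S p := by
    rintro p ⟨hp0, hp1⟩ q ⟨hq0, hq1⟩ hpq
    rcases eq_or_lt_of_le hq0 with h | hq0'
    · have hp : p = 0 := le_antisymm (h ▸ hpq) hp0
      rw [hp, ← h]
    · set l : ℝ := p / q with hl_def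
      have hlq : l * q = p := div_mul_cancel₀ p hq0'.ne'
      have hl0 : 0 ≤ l := div_nonneg hp0 hq0'.le
      have hl1 : l ≤ 1 := (div_le_one hq0').mpr hpq
      have key : ∀ y, (1 - l) * (a y * a y ^ γ) + l * (a y * ((1 - q) * a y + q * b y) ^ γ)
          ≤ a y * ((1 - p) * a y + p * b y) ^ γ := by
        intro y
        set mq : ℝ := (1 - q) * a y + q * b y with hmq_def
        have hmq0 : 0 < mq := hm q ⟨hq0, hq1⟩ y
        have hcc := (Real.concaveOn_rpow hγ0 hγ1).2
          (Set.mem_Ici.mpr (ha y).le) (Set.mem_Ici.mpr hmq0.le)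
          (by linarith : (0:ℝ) ≤ 1 - l) hl0 (by ring)
        simp only [smul_eq_mul] at hcc
        have hcombo : (1 - l) * a y + l * mq = (1 - p) * a y + p * b y := by
          rw [hmq_def, ← hlq]; ring
        rw [hcombo] at hcc
        calc (1 - l) * (a y * a y ^ γ) + l * (a y * mq ^ γ)
            = a y * ((1 - l) * a y ^ γ + l * mq ^ γ) := by ring
          _ ≤ a y * ((1 - p) * a y + p * b y) ^ γ :=
            mul_le_mul_of_nonneg_left hcc (ha y).le
      have haa : ∀ y, a y * a y ^ γ = P 0 y := by
        intro y
        rw [← haP y, Real.rpow_add (ha y), Real.rpow_one]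
      have h0 : ∑ y : 𝒴, a y * a y ^ γ = 1 := by
        rw [← hPsum 0]
        exact Finset.sum_congr rfl fun y _ => haa y
      have hsum : (1 - l) * 1 + l * S q ≤ S p := by
        have hle := Finset.sum_le_sum fun y (_ : y ∈ (univ : Finset 𝒴)) => key y
        rw [Finset.sum_add_distrib, ← Finset.mul_sum, ← Finset.mul_sum, h0] at hle
        exact hle
      have hSq1 : S q ≤ 1 := hSle q ⟨hq0, hq1⟩
      have hpos : (0:ℝ) ≤ (1 - l) * (1 - S q) :=
        mul_nonneg (by linarith) (by linarith)
      nlinarith [hsum, hpos]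
  -- conclude
  rintro p hp q hq hpq
  have hle : S q ≤ S p := hSmono p hp q hq hpq
  have hlog := Real.logb_le_logb_of_le (b := 2) one_lt_two (hSpos q hq) hle
  simp only [gallagerE0]
  exact neg_le_neg hlog
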